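/- Let H(q,p) = ½Σ_{i=1}^4 p_i² + Σ_{i=1}^3 e^{q_i − q_{i+1}} + e^{q_3 + q_4} + e^{−q_1} + e^{−2q_1} on ℝ^8. If (q(t), p(t)) solves Hamilton's equations q̇_i = ∂H/∂p_i, ṗ_i = −∂H/∂q_i, then the functions a_i = ½e^{(q_i − q_{i+1})/2} (i = 1,2,3), a_4 = ½e^{(q_3 + q_4)/2}, a_5 = (1/√2)e^{−q_1/2}, b_i = −½p_i (i = 1, …, 4) satisfy the system: ȧ_i = a_i(b_{i+1} − b_i) for i = 1,2,3; ȧ_4 = −a_4(b_3 + b_4); ȧ_5 = a_5 b_1; ḃ_1 = 2a_1² − a_5² − 4a_5⁴; ḃ_2 = 2(a_2² − a_1²); ḃ_4 = 2(a_4² − a_3²); ḃ_3 = 2(a_4² + a_3² − a_2²). -/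

import Mathlib

/-- The Kozlov–Treshchev Hamiltonian for `n = 4`:
`H(q,p) = ½Σ_{i=1}^4 p_i² + Σ_{i=1}^3 e^{q_i − q_{i+1}} + e^{q_3+q_4} + e^{−q_1} + e^{−2q_1}`
(coordinates indexed `1, …, 4`). -/
noncomputable def KT4Ham : (ℕ → ℝ) → (ℕ → ℝ) → ℝ := fun q p =>
  (1 / 2) * ∑ i ∈ Finset.Icc 1 4, (p i) ^ 2
    + ∑ i ∈ Finset.Icc 1 3, Real.exp (q i - q (i + 1))
    + Real.exp (q 3 + q 4) + Real.exp (-q 1) + Real.exp (-2 * q 1)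

/-!
Hamilton's equations for `KT4Ham` read `q̇_j = p_j` and `ṗ_j = −∂V/∂q_j`, where `V` is the
exponential potential. Each `a_k` has the form `c · exp (u / 2)` with `u` linear in `q`, so
`ȧ_k = a_k · u̇ / 2` is `a_k` times a linear form in the `b_i`. Each `ḃ_j = ½ ∂V/∂q_j` is a
combination of exponentials, and every one of them is a power of some `a_k`:
`e^{q_i − q_{i+1}} = 4 a_i²`, `e^{q_3 + q_4} = 4 a_4²`, `e^{−q_1} = 2 a_5²`, `e^{−2 q_1} = 4 a_5⁴`.
-/

open Real Finset

theorem hasDerivAt_update_apply {ι : Type*} [DecidableEq ι] (f : ι → ℝ) (j i : ι) (y : ℝ) :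
    HasDerivAt (fun x => Function.update f j x i) ((Pi.single j 1 : ι → ℝ) i) y := by
  by_cases h : i = j
  · subst h; simpa using hasDerivAt_id' y
  · simpa [h] using hasDerivAt_const y (f i)

theorem hasDerivAt_KT4Ham_update_p (q p : ℕ → ℝ) {j : ℕ} (hj : j ∈ Icc 1 4) (y : ℝ) :
    HasDerivAt (fun x => KT4Ham q (Function.update p j x)) y y := by
  have hc := fun i => hasDerivAt_update_apply p j i y
  have hkin := (HasDerivAt.fun_sum (u := Icc 1 4) fun i _ => (hc i).fun_pow 2).const_mul (1 / 2)
  have h : HasDerivAt (fun x => KT4Ham q (Function.update p j x)) _ y :=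
    (((hkin.add_const _).add_const _).add_const _).add_const _
  refine h.congr_deriv ?_
  simp [Pi.single_apply, hj]

/-- The derivative of the potential part of `KT4Ham` at `q` in the direction `v`. -/
noncomputable def KT4PotDeriv (q v : ℕ → ℝ) : ℝ :=
  ∑ i ∈ Icc 1 3, exp (q i - q (i + 1)) * (v i - v (i + 1)) + exp (q 3 + q 4) * (v 3 + v 4)
    - (exp (-q 1) + 2 * exp (-2 * q 1)) * v 1

theorem hasDerivAt_KT4Ham_update_q (q p : ℕ → ℝ) (j : ℕ) (y : ℝ) :
    HasDerivAt (fun x => KT4Ham (Function.update q j x) p)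
      (KT4PotDeriv (Function.update q j y) (Pi.single j 1)) y := by
  have hc := fun i => hasDerivAt_update_apply q j i y
  have h : HasDerivAt (fun x => KT4Ham (Function.update q j x) p) _ y :=
    ((((hasDerivAt_const y ((1 / 2) * ∑ i ∈ Icc 1 4, p i ^ 2)).fun_add
      (HasDerivAt.fun_sum (u := Icc 1 3) fun i _ => ((hc i).fun_sub (hc (i + 1))).exp)).fun_add
      ((hc 3).fun_add (hc 4)).exp).fun_add (hc 1).fun_neg.exp).fun_add
      ((hc 1).const_mul (-2)).exp
  refine h.congr_deriv ?_
  simp only [KT4PotDeriv]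
  ring

theorem hasDerivAt_of_eq_neg_half_momentum {q p b : ℝ → ℕ → ℝ} {t : ℝ} {j : ℕ}
    (hp : HasDerivAt (fun s => p s j)
      (-(deriv (fun x => KT4Ham (Function.update (q t) j x) (p t)) (q t j))) t)
    (hb : ∀ s, b s j = -(1 / 2) * p s j) :
    HasDerivAt (fun s => b s j) (KT4PotDeriv (q t) (Pi.single j 1) / 2) t := by
  rw [(hasDerivAt_KT4Ham_update_q (q t) (p t) j (q t j)).deriv, Function.update_eq_self] at hp
  rw [funext hb]
  exact (hp.const_mul _).congr_deriv (by ring)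

theorem KT4PotDeriv_single_one (q : ℕ → ℝ) :
    KT4PotDeriv q (Pi.single 1 1) = exp (q 1 - q 2) - (exp (-q 1) + 2 * exp (-2 * q 1)) := by
  simp [KT4PotDeriv, sum_Icc_succ_top, Pi.single_apply]

theorem KT4PotDeriv_single_two (q : ℕ → ℝ) :
    KT4PotDeriv q (Pi.single 2 1) = -exp (q 1 - q 2) + exp (q 2 - q 3) := by
  simp [KT4PotDeriv, sum_Icc_succ_top, Pi.single_apply]

theorem KT4PotDeriv_single_three (q : ℕ → ℝ) :
    KT4PotDeriv q (Pi.single 3 1) = -exp (q 2 - q 3) + exp (q 3 - q 4) + exp (q 3 + q 4) := by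
  simp [KT4PotDeriv, sum_Icc_succ_top, Pi.single_apply]

theorem KT4PotDeriv_single_four (q : ℕ → ℝ) :
    KT4PotDeriv q (Pi.single 4 1) = -exp (q 3 - q 4) + exp (q 3 + q 4) := by
  simp [KT4PotDeriv, sum_Icc_succ_top, Pi.single_apply]

theorem mul_exp_half_sq (c u : ℝ) : (c * exp (u / 2)) ^ 2 = c ^ 2 * exp u := by
  rw [mul_pow, ← exp_nat_mul]; ring_nf

theorem hasDerivAt_of_eq_mul_exp_half {f u : ℝ → ℝ} {c u' t : ℝ}
    (hf : ∀ s, f s = c * exp (u s / 2)) (hu : HasDerivAt u u' t) :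
    HasDerivAt f (f t * (u' / 2)) t := by
  obtain rfl : f = fun s => c * exp (u s / 2) := funext hf
  exact ((hu.div_const 2).exp.const_mul c).congr_deriv (by ring)

/-- If `(q(t), p(t))` solves Hamilton's equations for the `n = 4`
Kozlov–Treshchev Hamiltonian, then the Flaschka-type variables
`a_i = ½e^{(q_i − q_{i+1})/2}` (`i = 1,2,3`), `a_4 = ½e^{(q_3 + q_4)/2}`,
`a_5 = (1/√2)e^{−q_1/2}`, `b_i = −½p_i` satisfy the Kozlov–Treshchev system in
Flaschka variables. -/
theorem KT4_flaschka
    (q p : ℝ → ℕ → ℝ)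
    (hq : ∀ (t : ℝ), ∀ j ∈ Finset.Icc 1 4, HasDerivAt (fun s => q s j)
      (deriv (fun x => KT4Ham (q t) (Function.update (p t) j x)) (p t j)) t)
    (hp : ∀ (t : ℝ), ∀ j ∈ Finset.Icc 1 4, HasDerivAt (fun s => p s j)
      (-(deriv (fun x => KT4Ham (Function.update (q t) j x) (p t)) (q t j))) t)
    (a b : ℝ → ℕ → ℝ)
    (ha : ∀ (t : ℝ), ∀ i ∈ Finset.Icc 1 3,
      a t i = (1 / 2) * Real.exp ((q t i - q t (i + 1)) / 2))
    (ha4 : ∀ t : ℝ, a t 4 = (1 / 2) * Real.exp ((q t 3 + q t 4) / 2))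
    (ha5 : ∀ t : ℝ, a t 5 = (1 / Real.sqrt 2) * Real.exp (-(q t 1) / 2))
    (hb : ∀ (t : ℝ), ∀ i ∈ Finset.Icc 1 4, b t i = -(1 / 2) * p t i) :
    (∀ (t : ℝ), ∀ i ∈ Finset.Icc 1 3,
      HasDerivAt (fun s => a s i) (a t i * (b t (i + 1) - b t i)) t) ∧
    (∀ t : ℝ, HasDerivAt (fun s => a s 4) (-(a t 4 * (b t 3 + b t 4))) t) ∧
    (∀ t : ℝ, HasDerivAt (fun s => a s 5) (a t 5 * b t 1) t) ∧
    (∀ t : ℝ, HasDerivAt (fun s => b s 1)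
      (2 * (a t 1) ^ 2 - (a t 5) ^ 2 - 4 * (a t 5) ^ 4) t) ∧
    (∀ t : ℝ, HasDerivAt (fun s => b s 2) (2 * ((a t 2) ^ 2 - (a t 1) ^ 2)) t) ∧
    (∀ t : ℝ, HasDerivAt (fun s => b s 4) (2 * ((a t 4) ^ 2 - (a t 3) ^ 2)) t) ∧
    (∀ t : ℝ, HasDerivAt (fun s => b s 3)
      (2 * ((a t 4) ^ 2 + (a t 3) ^ 2 - (a t 2) ^ 2)) t) := by
  have hqdot (t : ℝ) (j : ℕ) (hj : j ∈ Icc 1 4) : HasDerivAt (fun s => q s j) (p t j) t := by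
    simpa only [(hasDerivAt_KT4Ham_update_p (q t) (p t) hj (p t j)).deriv] using hq t j hj
  have hbdot (t : ℝ) (j : ℕ) (hj : j ∈ Icc 1 4) :
      HasDerivAt (fun s => b s j) (KT4PotDeriv (q t) (Pi.single j 1) / 2) t :=
    hasDerivAt_of_eq_neg_half_momentum (hp t j hj) fun s => hb s j hj
  have hsq (t : ℝ) (i : ℕ) (hi : i ∈ Icc 1 3) : a t i ^ 2 = exp (q t i - q t (i + 1)) / 4 := by
    rw [ha t i hi, mul_exp_half_sq]; ring
  have hsq4 (t : ℝ) : a t 4 ^ 2 = exp (q t 3 + q t 4) / 4 := by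
    rw [ha4 t, mul_exp_half_sq]; ring
  have hsq5 (t : ℝ) : a t 5 ^ 2 = exp (-q t 1) / 2 := by
    rw [ha5 t, mul_exp_half_sq, div_pow, sq_sqrt zero_le_two]; ring_nf
  refine ⟨fun t i hi => ?_, fun t => ?_, fun t => ?_, fun t => ?_, fun t => ?_, fun t => ?_,
    fun t => ?_⟩
  · obtain ⟨hi', hi1⟩ : i ∈ Icc 1 4 ∧ i + 1 ∈ Icc 1 4 := by simp only [mem_Icc] at hi ⊢; omega
    refine (hasDerivAt_of_eq_mul_exp_half (fun s => ha s i hi)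
      ((hqdot t i hi').fun_sub (hqdot t (i + 1) hi1))).congr_deriv ?_
    rw [hb t i hi', hb t (i + 1) hi1]; ring
  · refine (hasDerivAt_of_eq_mul_exp_half ha4
      ((hqdot t 3 (by decide)).fun_add (hqdot t 4 (by decide)))).congr_deriv ?_
    rw [hb t 3 (by decide), hb t 4 (by decide)]; ring
  · refine (hasDerivAt_of_eq_mul_exp_half ha5 (hqdot t 1 (by decide)).fun_neg).congr_deriv ?_
    rw [hb t 1 (by decide)]; ring
  · have hexp : exp (-2 * q t 1) = exp (-q t 1) ^ 2 := by rw [← exp_nat_mul]; ring_nf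
    refine (hbdot t 1 (by decide)).congr_deriv ?_
    rw [KT4PotDeriv_single_one, hexp, show a t 5 ^ 4 = (a t 5 ^ 2) ^ 2 by ring,
      hsq t 1 (by decide), hsq5]
    ring
  · refine (hbdot t 2 (by decide)).congr_deriv ?_
    rw [KT4PotDeriv_single_two, hsq t 1 (by decide), hsq t 2 (by decide)]; ring
  · refine (hbdot t 4 (by decide)).congr_deriv ?_
    rw [KT4PotDeriv_single_four, hsq t 3 (by decide), hsq4]; ring
  · refine (hbdot t 3 (by decide)).congr_deriv ?_
    rw [KT4PotDeriv_single_three, hsq t 2 (by decide), hsq t 3 (by decide), hsq4]; ring
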